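/- The Fuchs–van de Graaf upper bound: for density matrices ρ, σ, the trace distance satisfies ‖ρ − σ‖₁ ≤ 2√(1 − F(ρ,σ)²), where F is the fidelity. -/

import Mathlib

open Matrix
open scoped ComplexOrder

namespace Matrix.PosSemidef

/-- The positive semidefinite square root of a positive semidefinite matrix
(the definition removed from Mathlib, restored with its old meaning). -/
noncomputable def sqrt {n 𝕜 : Type*} [Fintype n] [DecidableEq n] [RCLike 𝕜]
    {A : Matrix n n 𝕜} (hA : A.PosSemidef) : Matrix n n 𝕜 :=
  hA.1.eigenvectorUnitary.1 * diagonal ((↑) ∘ (√·) ∘ hA.1.eigenvalues) *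
    (star hA.1.eigenvectorUnitary : Matrix n n 𝕜)

end Matrix.PosSemidef

/-- Trace norm: `tr √(Aᴴ A)`. -/
noncomputable def traceNorm {n : Type*} [Fintype n] [DecidableEq n] (A : Matrix n n ℂ) : ℝ :=
  ((Matrix.posSemidef_conjTranspose_mul_self A).sqrt.trace).re

/-- Hilbert–Schmidt (Frobenius) norm: `√(tr (Aᴴ A))`. -/
noncomputable def hsNorm {n : Type*} [Fintype n] (A : Matrix n n ℂ) : ℝ :=
  Real.sqrt ((Aᴴ * A).trace.re)

/-- Fidelity `F(ρ,σ) = tr √(√ρ σ √ρ)` (using `(√ρ)ᴴ = √ρ`). -/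
noncomputable def fidelity {n : Type*} [Fintype n] [DecidableEq n] {ρ σ : Matrix n n ℂ}
    (hρ : ρ.PosSemidef) (hσ : σ.PosSemidef) : ℝ :=
  (((hσ.mul_mul_conjTranspose_same hρ.sqrt).sqrt).trace).re

/-! Write `ρ = X Xᴴ` and `σ = Y Yᴴ` with `X = √ρ` and `Y = √σ U`, where `U` is the unitary factor of
a polar decomposition of `√σ √ρ`, so that `tr (Xᴴ Y) = ‖√σ √ρ‖₁ = F`. Then
`2 (ρ - σ) = (X - Y)(X + Y)ᴴ + (X + Y)(X - Y)ᴴ`; pairing with a unitary that attains `‖ρ - σ‖₁` and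
applying Cauchy–Schwarz for the Hilbert–Schmidt inner product gives
`‖ρ - σ‖₁ ≤ ‖X + Y‖₂ ‖X - Y‖₂ = √((2 + 2F)(2 - 2F))`. -/

open scoped InnerProductSpace

section OrthonormalBasis

variable {𝕜 E ι : Type*} [RCLike 𝕜] [NormedAddCommGroup E] [InnerProductSpace 𝕜 E] [Fintype ι]

theorem exists_orthonormalBasis_inner_eq_norm_of_pairwise_inner_eq_zero [FiniteDimensional 𝕜 E]
    (hcard : Module.finrank 𝕜 E = Fintype.card ι) {v : ι → E}
    (hv : Pairwise fun i j => ⟪v i, v j⟫_𝕜 = 0) :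
    ∃ c : OrthonormalBasis ι 𝕜 E, ∀ i, ⟪v i, c i⟫_𝕜 = ‖v i‖ := by
  set w : ι → E := fun i => (‖v i‖⁻¹ : 𝕜) • v i
  have hw : Orthonormal 𝕜 ({i | v i ≠ 0}.domRestrict w) := by
    refine ⟨fun ⟨i, hi⟩ => ?_, fun ⟨i, _⟩ ⟨j, _⟩ hij => ?_⟩
    · simp [w, norm_smul, inv_mul_cancel₀ (norm_ne_zero_iff.mpr hi)]
    · simp [w, inner_smul_left, inner_smul_right, hv (Subtype.coe_ne_coe.mpr hij)]
  obtain ⟨c, hc⟩ := hw.exists_orthonormalBasis_extension_of_card_eq hcard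
  refine ⟨c, fun i => ?_⟩
  by_cases hi : v i = 0
  · simp [hi]
  · rw [hc i hi, inner_smul_right, inner_self_eq_norm_sq_to_K]
    field_simp

theorem OrthonormalBasis.exists_mem_unitary_inner_eq_norm [CompleteSpace E]
    (b : OrthonormalBasis ι 𝕜 E) {v : ι → E} (hv : Pairwise fun i j => ⟪v i, v j⟫_𝕜 = 0) :
    ∃ u ∈ unitary (E →L[𝕜] E), ∀ i, ⟪v i, u (b i)⟫_𝕜 = ‖v i‖ := by
  classical
  have : FiniteDimensional 𝕜 E := Module.Finite.of_basis b.toBasis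
  obtain ⟨c, hc⟩ := exists_orthonormalBasis_inner_eq_norm_of_pairwise_inner_eq_zero
    (Module.finrank_eq_card_basis b.toBasis) hv
  set W : E ≃ₗᵢ[𝕜] E := b.repr.trans c.repr.symm
  refine ⟨W, (Unitary.linearIsometryEquiv.symm W).2, fun i => ?_⟩
  have hWb : W (b i) = c i := by simp [W, b.repr_self, c.repr_symm_single]
  exact (congrArg _ hWb).trans (hc i)

end OrthonormalBasis

namespace Matrix

variable {n : Type*} [Fintype n] [DecidableEq n]

section RCLike

variable {𝕜 : Type*} [RCLike 𝕜]

theorem trace_eq_sum_inner_toEuclideanCLM {ι : Type*} [Fintype ι] (M : Matrix n n 𝕜)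
    (b : OrthonormalBasis ι 𝕜 (EuclideanSpace 𝕜 n)) :
    M.trace = ∑ i, ⟪b i, toEuclideanCLM (n := n) (𝕜 := 𝕜) M (b i)⟫_𝕜 := by
  have h := (toEuclideanLin M).trace_eq_sum_inner b
  rw [toEuclideanLin_eq_toLin_orthonormal, trace_toLin_eq] at h
  exact h

theorem inner_toEuclideanCLM_conjTranspose_mul (A B : Matrix n n 𝕜) (x y : EuclideanSpace 𝕜 n) :
    ⟪x, toEuclideanCLM (n := n) (𝕜 := 𝕜) (Aᴴ * B) y⟫_𝕜 =
      ⟪toEuclideanCLM (n := n) (𝕜 := 𝕜) A x, toEuclideanCLM (n := n) (𝕜 := 𝕜) B y⟫_𝕜 := by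
  rw [map_mul, ← star_eq_conjTranspose, map_star, ContinuousLinearMap.star_eq_adjoint,
    mul_apply_eq_comp, ContinuousLinearMap.adjoint_inner_right]

theorem IsHermitian.toEuclideanCLM_eigenvectorBasis {A : Matrix n n 𝕜} (hA : A.IsHermitian)
    (i : n) :
    toEuclideanCLM (n := n) (𝕜 := 𝕜) A (hA.eigenvectorBasis i) =
      (hA.eigenvalues i : 𝕜) • hA.eigenvectorBasis i :=
  WithLp.ofLp_injective 2 <| by
    rw [ofLp_toEuclideanCLM, hA.mulVec_eigenvectorBasis, WithLp.ofLp_smul,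
      RCLike.real_smul_eq_coe_smul (K := 𝕜)]

theorem PosSemidef.trace_sqrt {A : Matrix n n 𝕜} (hA : A.PosSemidef) :
    hA.sqrt.trace = ∑ i, (√(hA.1.eigenvalues i) : 𝕜) := by
  rw [PosSemidef.sqrt, trace_mul_cycle, Unitary.coe_star_mul_self, one_mul, trace_diagonal]
  rfl

end RCLike

namespace PosSemidef

open scoped MatrixOrder

variable {A : Matrix n n ℂ}

theorem sqrt_eq_cfcSqrt (hA : A.PosSemidef) : hA.sqrt = CFC.sqrt A := by
  rw [CFC.sqrt_eq_real_sqrt A hA.nonneg, cfcₙ_eq_cfc (hf0 := Real.sqrt_zero), hA.1.cfc_eq]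
  rfl

theorem conjTranspose_sqrt (hA : A.PosSemidef) : hA.sqrtᴴ = hA.sqrt := by
  rw [sqrt_eq_cfcSqrt]
  exact (CFC.sqrt_nonneg A).posSemidef.1

theorem sqrt_mul_self (hA : A.PosSemidef) : hA.sqrt * hA.sqrt = A := by
  rw [sqrt_eq_cfcSqrt]
  exact CFC.sqrt_mul_sqrt_self A hA.nonneg

end PosSemidef

end Matrix

-- `U` sends the eigenbasis `b` of `Aᴴ A` to an orthonormal basis extending the normalized `A b i`.
theorem exists_mem_unitaryGroup_trace_conjTranspose_mul_eq_traceNorm {n : Type*} [Fintype n]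
    [DecidableEq n] (A : Matrix n n ℂ) :
    ∃ U ∈ unitaryGroup n ℂ, (Aᴴ * U).trace = traceNorm A := by
  set hAA := (posSemidef_conjTranspose_mul_self A).1
  set b := hAA.eigenvectorBasis
  set T := toEuclideanCLM (n := n) (𝕜 := ℂ) A
  have inner_T (i j : n) : ⟪T (b i), T (b j)⟫_ℂ = hAA.eigenvalues j * ⟪b i, b j⟫_ℂ := by
    rw [← inner_toEuclideanCLM_conjTranspose_mul, hAA.toEuclideanCLM_eigenvectorBasis,
      inner_smul_right]
    rfl
  have norm_T (i : n) : ‖T (b i)‖ = √(hAA.eigenvalues i) := by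
    have h : ‖T (b i)‖ ^ 2 = hAA.eigenvalues i := by
      rw [@norm_sq_eq_re_inner ℂ, inner_T, b.inner_eq_one, mul_one, RCLike.re_to_complex,
        Complex.ofReal_re]
    rw [← h, Real.sqrt_sq (norm_nonneg _)]
  obtain ⟨u, hu, hTu⟩ := b.exists_mem_unitary_inner_eq_norm (v := fun i => T (b i))
    fun i j hij => by simp [inner_T, b.orthonormal.inner_eq_zero hij]
  refine ⟨_, Unitary.map_mem (toEuclideanCLM (n := n) (𝕜 := ℂ)).symm hu, ?_⟩
  rw [trace_eq_sum_inner_toEuclideanCLM _ b, traceNorm, PosSemidef.trace_sqrt]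
  simp only [inner_toEuclideanCLM_conjTranspose_mul, StarAlgEquiv.apply_symm_apply]
  simp [T, hTu, norm_T]

section HilbertSchmidt

variable {n : Type*} [Fintype n]

theorem trace_conjTranspose_mul_eq_inner_vec (B C : Matrix n n ℂ) :
    (Bᴴ * C).trace =
      ⟪(WithLp.toLp 2 B.vec : EuclideanSpace ℂ (n × n)), WithLp.toLp 2 C.vec⟫_ℂ := by
  rw [EuclideanSpace.inner_toLp_toLp, dotProduct_comm, star_vec_dotProduct_vec]

theorem hsNorm_eq_norm_vec (B : Matrix n n ℂ) :
    hsNorm B = ‖(WithLp.toLp 2 B.vec : EuclideanSpace ℂ (n × n))‖ := by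
  rw [hsNorm, trace_conjTranspose_mul_eq_inner_vec, ← RCLike.re_to_complex,
    ← norm_sq_eq_re_inner, Real.sqrt_sq (norm_nonneg _)]

theorem norm_trace_conjTranspose_mul_le (B C : Matrix n n ℂ) :
    ‖(Bᴴ * C).trace‖ ≤ hsNorm B * hsNorm C := by
  rw [trace_conjTranspose_mul_eq_inner_vec, hsNorm_eq_norm_vec, hsNorm_eq_norm_vec]
  exact norm_inner_le_norm _ _

theorem hsNorm_add_sq (B C : Matrix n n ℂ) :
    hsNorm (B + C) ^ 2 = hsNorm B ^ 2 + 2 * (Bᴴ * C).trace.re + hsNorm C ^ 2 := by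
  simp only [hsNorm_eq_norm_vec, trace_conjTranspose_mul_eq_inner_vec, vec_add, WithLp.toLp_add]
  rw [← RCLike.re_to_complex, norm_add_sq (𝕜 := ℂ)]

theorem hsNorm_sub_sq (B C : Matrix n n ℂ) :
    hsNorm (B - C) ^ 2 = hsNorm B ^ 2 - 2 * (Bᴴ * C).trace.re + hsNorm C ^ 2 := by
  simp only [hsNorm_eq_norm_vec, trace_conjTranspose_mul_eq_inner_vec, vec_sub, WithLp.toLp_sub]
  rw [← RCLike.re_to_complex, norm_sub_sq (𝕜 := ℂ)]

theorem hsNorm_sq_eq_re_trace_mul_conjTranspose (B : Matrix n n ℂ) :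
    hsNorm B ^ 2 = (B * Bᴴ).trace.re := by
  rw [hsNorm_eq_norm_vec, @norm_sq_eq_re_inner ℂ, ← trace_conjTranspose_mul_eq_inner_vec,
    RCLike.re_to_complex, trace_mul_comm]

variable [DecidableEq n]

theorem hsNorm_unitary_mul {U : Matrix n n ℂ} (hU : U ∈ unitaryGroup n ℂ) (B : Matrix n n ℂ) :
    hsNorm (U * B) = hsNorm B := by
  rw [hsNorm, hsNorm, conjTranspose_mul, mul_assoc, ← mul_assoc Uᴴ, ← star_eq_conjTranspose U,
    Unitary.star_mul_self_of_mem hU, one_mul]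

theorem re_trace_mul_conjTranspose_mul_le {U : Matrix n n ℂ} (hU : U ∈ unitaryGroup n ℂ)
    (B C : Matrix n n ℂ) : (B * Cᴴ * U).trace.re ≤ hsNorm B * hsNorm C := by
  rw [mul_assoc, trace_mul_comm, mul_assoc, mul_comm (hsNorm B), ← hsNorm_unitary_mul hU B]
  exact (Complex.re_le_norm _).trans (norm_trace_conjTranspose_mul_le C (U * B))

end HilbertSchmidt

theorem traceNorm_mul_conjTranspose_sub_le {n : Type*} [Fintype n] [DecidableEq n]
    (X Y : Matrix n n ℂ) :
    traceNorm (X * Xᴴ - Y * Yᴴ) ≤ hsNorm (X + Y) * hsNorm (X - Y) := by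
  set H := X * Xᴴ - Y * Yᴴ
  have hH : Hᴴ = H := by
    simp only [H, conjTranspose_sub, conjTranspose_mul, conjTranspose_conjTranspose]
  obtain ⟨U, hU, hUH⟩ := exists_mem_unitaryGroup_trace_conjTranspose_mul_eq_traceNorm H
  rw [hH] at hUH
  have polarization : (X - Y) * (X + Y)ᴴ + (X + Y) * (X - Y)ᴴ = H + H := by
    simp only [H, conjTranspose_add, conjTranspose_sub]
    noncomm_ring
  have two_traceNorm : 2 * traceNorm H =
      ((X - Y) * (X + Y)ᴴ * U).trace.re + ((X + Y) * (X - Y)ᴴ * U).trace.re := by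
    rw [← Complex.add_re, ← trace_add, ← add_mul, polarization, add_mul, trace_add, hUH]
    simp [two_mul]
  linarith [re_trace_mul_conjTranspose_mul_le hU (X - Y) (X + Y),
    re_trace_mul_conjTranspose_mul_le hU (X + Y) (X - Y)]

theorem fidelity_eq_traceNorm {n : Type*} [Fintype n] [DecidableEq n] {ρ σ : Matrix n n ℂ}
    (hρ : ρ.PosSemidef) (hσ : σ.PosSemidef) :
    fidelity hρ hσ = traceNorm (hσ.sqrt * hρ.sqrt) := by
  have h : hρ.sqrt * σ * hρ.sqrtᴴ = (hσ.sqrt * hρ.sqrt)ᴴ * (hσ.sqrt * hρ.sqrt) := by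
    simp only [conjTranspose_mul, hσ.conjTranspose_sqrt, hρ.conjTranspose_sqrt, mul_assoc]
    rw [← mul_assoc hσ.sqrt, hσ.sqrt_mul_self]
  unfold fidelity traceNorm
  congr 3

theorem fuchs_van_de_graaf_upper {n : Type*} [Fintype n] [DecidableEq n]
    {ρ σ : Matrix n n ℂ}
    (hρ : ρ.PosSemidef) (hρ1 : ρ.trace = 1)
    (hσ : σ.PosSemidef) (hσ1 : σ.trace = 1) :
    traceNorm (ρ - σ) ≤ 2 * Real.sqrt (1 - (fidelity hρ hσ) ^ 2) := by
  obtain ⟨U, hU, hUF⟩ :=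
    exists_mem_unitaryGroup_trace_conjTranspose_mul_eq_traceNorm (hσ.sqrt * hρ.sqrt)
  set F := fidelity hρ hσ with hF_def
  set X := hρ.sqrt
  set Y := hσ.sqrt * U
  have hXX : X * Xᴴ = ρ := by rw [hρ.conjTranspose_sqrt, hρ.sqrt_mul_self]
  have hYY : Y * Yᴴ = σ := by
    rw [conjTranspose_mul, hσ.conjTranspose_sqrt, mul_assoc, ← mul_assoc U,
      ← star_eq_conjTranspose U, Unitary.mul_star_self_of_mem hU, one_mul, hσ.sqrt_mul_self]
  have hXY : (Xᴴ * Y).trace = F := by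
    rw [hF_def, fidelity_eq_traceNorm, ← hUF, conjTranspose_mul, hσ.conjTranspose_sqrt, mul_assoc]
  have hX : hsNorm X ^ 2 = 1 := by
    rw [hsNorm_sq_eq_re_trace_mul_conjTranspose, hXX, hρ1, Complex.one_re]
  have hY : hsNorm Y ^ 2 = 1 := by
    rw [hsNorm_sq_eq_re_trace_mul_conjTranspose, hYY, hσ1, Complex.one_re]
  calc traceNorm (ρ - σ) = traceNorm (X * Xᴴ - Y * Yᴴ) := by rw [hXX, hYY]
    _ ≤ hsNorm (X + Y) * hsNorm (X - Y) := traceNorm_mul_conjTranspose_sub_le X Y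
    _ = √((hsNorm (X + Y) * hsNorm (X - Y)) ^ 2) :=
      (Real.sqrt_sq (mul_nonneg (Real.sqrt_nonneg _) (Real.sqrt_nonneg _))).symm
    _ = √(2 ^ 2 * (1 - F ^ 2)) := by
      rw [mul_pow, hsNorm_add_sq, hsNorm_sub_sq, hX, hY, hXY, Complex.ofReal_re]
      ring_nf
    _ = 2 * √(1 - F ^ 2) := by rw [Real.sqrt_mul (by positivity), Real.sqrt_sq zero_le_two]
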